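/- arXiv:2010.14566 — 2 statements merged into one kernel-verified Lean document; each statement's English description precedes it below -/
import Mathlib

section
/- Let (p_{(R,α)}(x)) be a state-dependent replacement rule: for each state x ∈ {1,…,n}^N, a probability distribution over replacement events. Suppose u > 0 and the following fixation axiom holds: there exist a site i, an integer m ≥ 1, and replacement events (R_1,α_1),…,(R_m,α_m) such that p_{(R_k,α_k)}(x) > 0 for every k ∈ {1,…,m} and every state x, i ∈ R_k for some k, and α̃_1 ∘ α̃_2 ∘ ⋯ ∘ α̃_m(j) = i for every site j. Then the Markov chain on {1,…,n}^N with transition probabilities P_{x→y} = Σ_{(R,α)} p_{(R,α)}(x) · ∏_{i∈R} ((1−u)·1[y_i = x_{α(i)}] + u/n) · ∏_{i∉R} 1[y_i = x_i] has a unique stationary distribution. -/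
open Finset

namespace SCT

abbrev Event (N : ℕ) := Finset (Fin N) × (Fin N → Fin N)

/-- The extension `α̃` of the parentage map of a replacement event:
it equals `α` on `R` and the identity off `R`. -/
def extMap {N : ℕ} (E : Event N) : Fin N → Fin N :=
  fun i => if i ∈ E.1 then E.2 i else i

/-- Transition probabilities of the mutation–selection Markov chain on states
`Fin N → Fin n`, for a replacement rule `p` and mutation probability `u`. -/
noncomputable def transMat (N n : ℕ) (p : Event N → ℝ) (u : ℝ)
    (x y : Fin N → Fin n) : ℝ :=
  ∑ E : Event N, p E *
    (∏ i ∈ E.1, ((1 - u) * (if y i = x (E.2 i) then (1:ℝ) else 0) + u / (n:ℝ))) *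
    (∏ i ∈ E.1ᶜ, (if y i = x i then (1:ℝ) else 0))

def IsDist {α : Type*} [Fintype α] (q : α → ℝ) : Prop :=
  (∀ a, 0 ≤ q a) ∧ ∑ a, q a = 1

def IsStationary {N n : ℕ} (P : (Fin N → Fin n) → (Fin N → Fin n) → ℝ)
    (π : (Fin N → Fin n) → ℝ) : Prop :=
  IsDist π ∧ ∀ y, ∑ x, π x * P x y = π y

/-- Fixation axiom: some site `i` can propagate its lineage through the whole
population via finitely many replacement events of positive probability. -/
def FixationAxiom {N : ℕ} (p : Event N → ℝ) : Prop :=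
  ∃ (i : Fin N) (m : ℕ) (E : Fin m → Event N), 1 ≤ m ∧
    (∀ k, 0 < p (E k)) ∧ (∃ k, i ∈ (E k).1) ∧
    ∀ j, ((List.ofFn (fun k => extMap (E k))).foldr (· ∘ ·) id) j = i

/-- Pairwise identity-by-state probability under the distribution `π`. -/
noncomputable def phi2 {N n : ℕ} (π : (Fin N → Fin n) → ℝ) (i j : Fin N) : ℝ :=
  ∑ x, π x * (if x i = x j then (1:ℝ) else 0)

/-- Triple identity-by-state probability under the distribution `π`. -/
noncomputable def phi3 {N n : ℕ} (π : (Fin N → Fin n) → ℝ) (i j k : Fin N) : ℝ :=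
  ∑ x, π x * (if x i = x j ∧ x j = x k then (1:ℝ) else 0)

/-!
Since the transition matrix `P` is row-stochastic, `P - 1` kills the all-ones vector and so has
a nonzero left null vector `v`; the triangle inequality gives `|v| ≤ |v| P` entrywise, with equal
total mass, so `|v|` normalised is stationary. For uniqueness, the fixation axiom forces every
site to be replaced by one of the events `E_1, …, E_m`, and as `u > 0` a replaced site can take
any type, so `P^m` has positive entries. Doeblin's contraction for `P^m` then annihilates the
difference of two stationary distributions.
-/

open Matrix

section Stochastic

variable {S : Type*} [Fintype S] [DecidableEq S] {M : Matrix S S ℝ}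

theorem sum_vecMul_of_mem_rowStochastic (hM : M ∈ rowStochastic ℝ S) (v : S → ℝ) :
    ∑ y, (v ᵥ* M) y = ∑ x, v x := by
  rw [← dotProduct_one, ← dotProduct_one, ← dotProduct_mulVec,
    one_vecMul_of_mem_rowStochastic hM]

theorem abs_vecMul_le_of_mem_rowStochastic (hM : M ∈ rowStochastic ℝ S) (v : S → ℝ)
    (y : S) :
    |(v ᵥ* M) y| ≤ ((fun x => |v x|) ᵥ* M) y := by
  simp only [vecMul, dotProduct]
  refine (abs_sum_le_sum_abs _ _).trans_eq (sum_congr rfl fun x _ => ?_)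
  rw [abs_mul, abs_of_nonneg (nonneg_of_mem_rowStochastic hM)]

theorem exists_isDist_vecMul_eq_self [Nonempty S] (hM : M ∈ rowStochastic ℝ S) :
    ∃ π : S → ℝ, IsDist π ∧ π ᵥ* M = π := by
  have hdet : (M - 1).det = 0 := by
    refine exists_mulVec_eq_zero_iff.1 ⟨1, one_ne_zero, ?_⟩
    rw [sub_mulVec, one_vecMul_of_mem_rowStochastic hM, one_mulVec, sub_self]
  obtain ⟨v, hv0, hv⟩ := exists_vecMul_eq_zero_iff.2 hdet
  rw [vecMul_sub, vecMul_one, sub_eq_zero] at hv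
  set w : S → ℝ := fun x => |v x|
  have hw : w ᵥ* M = w := by
    have hle : ∀ y ∈ univ, w y ≤ (w ᵥ* M) y := fun y _ => by
      simpa only [w, hv] using abs_vecMul_le_of_mem_rowStochastic hM v y
    exact funext fun y => ((sum_eq_sum_iff_of_le hle).1
      (sum_vecMul_of_mem_rowStochastic hM w).symm y (mem_univ y)).symm
  have hmass : 0 < ∑ x, w x := by
    obtain ⟨x, hx⟩ := Function.ne_iff.1 hv0
    exact sum_pos' (fun y _ => abs_nonneg (v y)) ⟨x, mem_univ x, abs_pos.2 hx⟩
  refine ⟨fun x => w x / ∑ x, w x, ⟨fun x => by positivity, ?_⟩, ?_⟩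
  · rw [← sum_div, div_self hmass.ne']
  · have : (fun x => w x / ∑ x, w x) = (∑ x, w x)⁻¹ • w := by
      ext x; simp [div_eq_inv_mul]
    rw [this, smul_vecMul, hw]

/-- Doeblin's contraction: mass `δ` of every row can be discarded, because `d` has total
mass `0`. -/
theorem sum_abs_vecMul_le (hM : M ∈ rowStochastic ℝ S) {δ : ℝ} (hδ : ∀ x y, δ ≤ M x y)
    {d : S → ℝ} (hd : ∑ x, d x = 0) :
    ∑ y, |(d ᵥ* M) y| ≤ (1 - Fintype.card S * δ) * ∑ x, |d x| := by
  have hshift : ∀ y, (d ᵥ* M) y = ∑ x, d x * (M x y - δ) := fun y => by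
    simp only [vecMul, dotProduct, mul_sub, sum_sub_distrib, ← sum_mul, hd, zero_mul, sub_zero]
  calc ∑ y, |(d ᵥ* M) y| ≤ ∑ y, ∑ x, |d x| * (M x y - δ) := by
        refine sum_le_sum fun y _ => ?_
        rw [hshift]
        refine (abs_sum_le_sum_abs _ _).trans_eq (sum_congr rfl fun x _ => ?_)
        rw [abs_mul, abs_of_nonneg (sub_nonneg.2 (hδ x y))]
    _ = (1 - Fintype.card S * δ) * ∑ x, |d x| := by
        rw [sum_comm, mul_sum]
        refine sum_congr rfl fun x _ => ?_
        rw [← mul_sum, sum_sub_distrib, sum_row_of_mem_rowStochastic hM, sum_const, card_univ,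
          nsmul_eq_mul, mul_comm]

theorem eq_zero_of_vecMul_eq_self [Nonempty S] (hM : M ∈ rowStochastic ℝ S)
    (hpos : ∀ x y, 0 < M x y) {d : S → ℝ} (hd : ∑ x, d x = 0) (hdM : d ᵥ* M = d) :
    d = 0 := by
  obtain ⟨b, hb⟩ := Finite.exists_min fun b : S × S => M b.1 b.2
  have hcontr := sum_abs_vecMul_le hM (fun x y => hb (x, y)) hd
  rw [hdM] at hcontr
  have hgap : 0 < Fintype.card S * M b.1 b.2 :=
    mul_pos (Nat.cast_pos.2 Fintype.card_pos) (hpos _ _)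
  have habs : ∀ x ∈ univ, 0 ≤ |d x| := fun x _ => abs_nonneg (d x)
  have hsum : ∑ x, |d x| = 0 := le_antisymm (by nlinarith [sum_nonneg habs]) (sum_nonneg habs)
  ext x
  exact abs_eq_zero.1 ((sum_eq_zero_iff_of_nonneg habs).1 hsum x (mem_univ x))

theorem vecMul_pow_eq_self {v : S → ℝ} (hv : v ᵥ* M = v) (k : ℕ) : v ᵥ* M ^ k = v := by
  induction k with
  | zero => rw [pow_zero, vecMul_one]
  | succ k ih => rw [pow_succ', ← vecMul_vecMul, hv, ih]

theorem existsUnique_isDist_vecMul_eq_self [Nonempty S] (hM : M ∈ rowStochastic ℝ S) {m : ℕ}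
    (hpos : ∀ x y, 0 < (M ^ m) x y) : ∃! π : S → ℝ, IsDist π ∧ π ᵥ* M = π := by
  obtain ⟨π, hπ, hπM⟩ := exists_isDist_vecMul_eq_self hM
  refine ⟨π, ⟨hπ, hπM⟩, fun ρ ⟨hρ, hρM⟩ => sub_eq_zero.1 ?_⟩
  refine eq_zero_of_vecMul_eq_self (pow_mem hM m) hpos ?_ ?_
  · simp only [Pi.sub_apply, sum_sub_distrib, hρ.2, hπ.2, sub_self]
  · rw [sub_vecMul, vecMul_pow_eq_self hρM, vecMul_pow_eq_self hπM]

end Stochastic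

section Chain

variable {N n : ℕ}

/-- Law of the new type at site `i` after event `E` from state `x`: a replaced site copies
its parent `E.2 i` except for a mutation with probability `u` to a uniform type. -/
noncomputable def siteKernel (u : ℝ) (E : Event N) (x : Fin N → Fin n) (i : Fin N)
    (c : Fin n) : ℝ :=
  if i ∈ E.1 then (1 - u) * (if c = x (E.2 i) then 1 else 0) + u / n
  else if c = x i then 1 else 0

theorem transMat_eq_sum_prod_siteKernel (p : Event N → ℝ) (u : ℝ) (x y : Fin N → Fin n) :
    transMat N n p u x y = ∑ E, p E * ∏ i, siteKernel u E x i (y i) := by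
  refine sum_congr rfl fun E _ => ?_
  rw [mul_assoc, ← prod_mul_prod_compl E.1 fun i => siteKernel u E x i (y i)]
  congr 2
  · exact prod_congr rfl fun i hi => by simp [siteKernel, hi]
  · exact prod_congr rfl fun i hi => by simp [siteKernel, mem_compl.1 hi]

variable {u : ℝ}

theorem siteKernel_nonneg (hu0 : 0 ≤ u) (hu1 : u ≤ 1) (E : Event N) (x : Fin N → Fin n)
    (i : Fin N) (c : Fin n) : 0 ≤ siteKernel u E x i c := by
  unfold siteKernel
  have : 0 ≤ u / n := div_nonneg hu0 n.cast_nonneg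
  split_ifs <;> linarith

theorem siteKernel_pos (hn : 0 < n) (hu0 : 0 < u) (hu1 : u ≤ 1) {E : Event N}
    {x : Fin N → Fin n} {i : Fin N} {c : Fin n} (h : i ∈ E.1 ∨ c = x i) :
    0 < siteKernel u E x i c := by
  unfold siteKernel
  split_ifs with hi _ hc
  · linarith [div_pos hu0 (Nat.cast_pos.2 hn)]
  · exact add_pos_of_nonneg_of_pos (by simp) (div_pos hu0 (Nat.cast_pos.2 hn))
  · exact one_pos
  · exact absurd (h.resolve_left hi) hc

theorem sum_siteKernel (hn : 0 < n) (E : Event N) (x : Fin N → Fin n) (i : Fin N) :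
    ∑ c, siteKernel u E x i c = 1 := by
  unfold siteKernel
  split_ifs
  · rw [sum_add_distrib, ← mul_sum, sum_ite_eq', sum_const, card_univ, Fintype.card_fin,
      nsmul_eq_mul, if_pos (mem_univ _)]
    field_simp
    ring
  · simp

noncomputable def chainMatrix (p : (Fin N → Fin n) → Event N → ℝ) (u : ℝ) :
    Matrix (Fin N → Fin n) (Fin N → Fin n) ℝ :=
  Matrix.of fun x y => transMat N n (p x) u x y

variable {p : (Fin N → Fin n) → Event N → ℝ}

theorem chainMatrix_mem_rowStochastic (hn : 0 < n) (hp : ∀ x, IsDist (p x)) (hu0 : 0 ≤ u)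
    (hu1 : u ≤ 1) : chainMatrix p u ∈ rowStochastic ℝ (Fin N → Fin n) := by
  refine mem_rowStochastic_iff_sum.2 ⟨fun x y => ?_, fun x => ?_⟩
  · rw [chainMatrix, of_apply, transMat_eq_sum_prod_siteKernel]
    exact sum_nonneg fun E _ => mul_nonneg ((hp x).1 E)
      (prod_nonneg fun i _ => siteKernel_nonneg hu0 hu1 E x i _)
  · simp only [chainMatrix, of_apply, transMat_eq_sum_prod_siteKernel]
    rw [sum_comm]
    simp only [← mul_sum, ← Fintype.prod_sum, sum_siteKernel hn, prod_const_one, mul_one]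
    exact (hp x).2

theorem chainMatrix_pos (hn : 0 < n) (hp : ∀ x, IsDist (p x)) (hu0 : 0 < u) (hu1 : u ≤ 1)
    {x y : Fin N → Fin n} {E : Event N} (hE : 0 < p x E) (hy : ∀ i ∉ E.1, y i = x i) :
    0 < chainMatrix p u x y := by
  rw [chainMatrix, of_apply, transMat_eq_sum_prod_siteKernel]
  refine sum_pos' (fun E' _ => mul_nonneg ((hp x).1 E')
    (prod_nonneg fun i _ => siteKernel_nonneg hu0.le hu1 E' x i _)) ⟨E, mem_univ E, ?_⟩
  refine mul_pos hE (prod_pos fun i _ => siteKernel_pos hn hu0 hu1 ?_)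
  by_cases hi : i ∈ E.1
  · exact Or.inl hi
  · exact Or.inr (hy i hi)

theorem chainMatrix_pow_length_pos (hn : 0 < n) (hp : ∀ x, IsDist (p x)) (hu0 : 0 < u)
    (hu1 : u ≤ 1) (l : List (Event N)) (hl : ∀ E ∈ l, ∀ x, 0 < p x E)
    {x y : Fin N → Fin n} (hxy : ∀ j, (∀ E ∈ l, j ∉ E.1) → y j = x j) :
    0 < (chainMatrix p u ^ l.length) x y := by
  induction l generalizing x with
  | nil => simp [show y = x from funext fun j => hxy j (by simp)]
  | cons E t ih =>
    set z : Fin N → Fin n := fun i => if i ∈ E.1 then y i else x i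
    have hM := chainMatrix_mem_rowStochastic hn hp hu0.le hu1
    have hxz : 0 < chainMatrix p u x z :=
      chainMatrix_pos hn hp hu0 hu1 (hl E List.mem_cons_self x) fun i hi => if_neg hi
    have hzy : 0 < (chainMatrix p u ^ t.length) z y := by
      refine ih (fun E' hE' => hl E' (List.mem_cons_of_mem _ hE')) fun j hj => ?_
      by_cases hjE : j ∈ E.1
      · exact (if_pos hjE).symm
      · rw [hxy j (by simpa [hjE] using hj)]
        exact (if_neg hjE).symm
    rw [List.length_cons, pow_succ', mul_apply]
    exact sum_pos' (fun w _ => mul_nonneg (nonneg_of_mem_rowStochastic hM)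
      (nonneg_of_mem_rowStochastic (pow_mem hM _))) ⟨z, mem_univ z, mul_pos hxz hzy⟩

end Chain

theorem isFixedPt_foldr_comp {α : Type*} {j : α} :
    ∀ L : List (α → α), (∀ g ∈ L, Function.IsFixedPt g j) →
      Function.IsFixedPt (L.foldr (· ∘ ·) id) j
  | [], _ => rfl
  | g :: L, h => (h g List.mem_cons_self).comp
      (isFixedPt_foldr_comp L fun g' hg' => h g' (List.mem_cons_of_mem _ hg'))

/-- A site `j` untouched by all the events is fixed by the composite, hence equals `i`,
which is touched by one of them. -/
theorem exists_mem_of_foldr_comp_extMap_eq {N m : ℕ} {E : Fin m → Event N} {i : Fin N}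
    (hi : ∃ k, i ∈ (E k).1)
    (hcomp : ∀ j, ((List.ofFn (fun k => extMap (E k))).foldr (· ∘ ·) id) j = i) (j : Fin N) :
    ∃ k, j ∈ (E k).1 := by
  by_contra! hj
  have hfix : j = i := (isFixedPt_foldr_comp (j := j) (List.ofFn fun k => extMap (E k))
    (by simp [List.mem_ofFn, Function.IsFixedPt, extMap, hj])).symm.trans (hcomp j)
  obtain ⟨k, hk⟩ := hi
  exact hj k (hfix ▸ hk)

theorem isStationary_iff {N n : ℕ} {P : (Fin N → Fin n) → (Fin N → Fin n) → ℝ}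
    {π : (Fin N → Fin n) → ℝ} :
    IsStationary P π ↔ IsDist π ∧ π ᵥ* Matrix.of P = π := by
  simp only [IsStationary, funext_iff, vecMul, dotProduct, of_apply]

theorem stmt18_general (N n : ℕ) (hn : 1 ≤ n)
    (p : (Fin N → Fin n) → Event N → ℝ)
    (hp : ∀ x, IsDist (p x))
    (u : ℝ) (hu0 : 0 < u) (hu1 : u ≤ 1)
    (hfix : ∃ (i : Fin N) (m : ℕ) (E : Fin m → Event N), 1 ≤ m ∧
      (∀ k (x : Fin N → Fin n), 0 < p x (E k)) ∧ (∃ k, i ∈ (E k).1) ∧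
      ∀ j, ((List.ofFn (fun k => extMap (E k))).foldr (· ∘ ·) id) j = i) :
    ∃! π : (Fin N → Fin n) → ℝ,
      IsStationary (fun x y => transMat N n (p x) u x y) π := by
  obtain ⟨i, m, E, -, hEpos, hi, hcomp⟩ := hfix
  have : Nonempty (Fin N → Fin n) := ⟨fun _ => ⟨0, hn⟩⟩
  have hpos (x y : Fin N → Fin n) : 0 < (chainMatrix p u ^ m) x y := by
    have hcover (j : Fin N) : ¬∀ F ∈ List.ofFn E, j ∉ F.1 := by
      simpa [List.mem_ofFn] using exists_mem_of_foldr_comp_extMap_eq hi hcomp j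
    simpa using chainMatrix_pow_length_pos hn hp hu0 hu1 (List.ofFn E)
      (by simpa [List.mem_ofFn] using hEpos) fun j hj => absurd hj (hcover j)
  simp only [isStationary_iff]
  exact existsUnique_isDist_vecMul_eq_self (chainMatrix_mem_rowStochastic hn hp hu0.le hu1) hpos

/-- under the fixation axiom (uniformly in the state) and `u > 0`,
the mutation–selection Markov chain for a state-dependent replacement rule has
a unique stationary distribution. -/
theorem stmt18 (N n : ℕ) (hN : 1 ≤ N) (hn : 1 ≤ n)
    (p : (Fin N → Fin n) → Event N → ℝ)
    (hp : ∀ x, IsDist (p x))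
    (u : ℝ) (hu0 : 0 < u) (hu1 : u ≤ 1)
    (hfix : ∃ (i : Fin N) (m : ℕ) (E : Fin m → Event N), 1 ≤ m ∧
      (∀ k (x : Fin N → Fin n), 0 < p x (E k)) ∧ (∃ k, i ∈ (E k).1) ∧
      ∀ j, ((List.ofFn (fun k => extMap (E k))).foldr (· ∘ ·) id) j = i) :
    ∃! π : (Fin N → Fin n) → ℝ,
      IsStationary (fun x y => transMat N n (p x) u x y) π :=
  stmt18_general N n hn p hp u hu0 hu1 hfix

end SCT
end

section
/- Fix N, a neutral replacement rule p° satisfying the fixation axiom, and u ∈ (0,1]. For each integer n ≥ 1, let φ_ij(n) := P_{π°(n)}[X_i = X_j] and φ_ijk(n) := P_{π°(n)}[X_i = X_j = X_k], where π°(n) is the unique stationary distribution of the neutral chain with n strategies. Then: (i) for all sites i, j there exist reals a_{ij}, b_{ij}, not depending on n, such that n·φ_ij(n) = a_{ij}·n + b_{ij} for every n ≥ 1; and (ii) for all sites i, j, k there exist reals c_{ijk}, d_{ijk}, e_{ijk}, not depending on n, such that n²·φ_ijk(n) = c_{ijk}·n² + d_{ijk}·n + e_{ijk} for every n ≥ 1.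 -/
open Finset

namespace SCT

/-!
For a set `S` of sites let `φ_S(n)` be the stationary probability that all sites of `S` carry
the same strategy, so `φ_ij = φ_{i,j}` and `φ_ijk = φ_{i,j,k}`. In one step every site of `S`
is traced back to its parent and independently either copies the parent's strategy or mutates
to a uniform one. Expanding over the set `T ⊆ S` of copying sites, stationarity gives
`φ_S = ∑_E p_E ∑_{T ⊆ S} P_E(exactly T copies) n^{-|S \ T|} φ_{α̃ T}` (with `n` in place of
`φ_∅`). Every term except `T = S` with `α̃` injective on `S` involves fewer sites, so by
induction on `|S|` the `φ_S` with `|S| = k` solve `f = A f + g` with `A` independent of `n` and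
`g` polynomial of degree `< k` in `1/n`. The fixation axiom makes all lineages merge along one
finite sequence of events, so by a maximum principle `1 - A` is injective, and `φ_S` is a
polynomial of degree `< |S|` in `1/n`.
-/

section WeightedShift

variable {κ ι : Type*} [Fintype κ]

def weightedShift (p : κ → ℝ) (c : κ → ι → ℝ) (g : κ → ι → ι) : (ι → ℝ) →ₗ[ℝ] (ι → ℝ) where
  toFun f z := ∑ E, p E * (c E z * f (g E z))
  map_add' f f' := by
    ext z
    simp only [Pi.add_apply, mul_add, sum_add_distrib]
  map_smul' a f := by
    ext z
    simp only [Pi.smul_apply, smul_eq_mul, RingHom.id_apply, mul_sum]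
    exact sum_congr rfl fun E _ => by ring

variable {p : κ → ℝ} {c : κ → ι → ℝ} {g : κ → ι → ι}

lemma weightedShift_apply (f : ι → ℝ) (z : ι) :
    weightedShift p c g f z = ∑ E, p E * (c E z * f (g E z)) := rfl

lemma weight_ne_zero_and_abs_eq_of_isMax (hp : IsDist p) (hc0 : ∀ E z, 0 ≤ c E z)
    (hc1 : ∀ E z, c E z ≤ 1)
    {f : ι → ℝ} (hf : weightedShift p c g f = f) {M : ℝ} (hM : ∀ z, |f z| ≤ M) (hM0 : 0 < M)
    {z : ι} (hz : |f z| = M) {E : κ} (hE : 0 < p E) :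
    c E z ≠ 0 ∧ |f (g E z)| = M := by
  have hstep : ∀ E', c E' z * |f (g E' z)| ≤ M := fun E' =>
    (mul_le_of_le_one_left (abs_nonneg _) (hc1 E' z)).trans (hM _)
  have hmax : M ≤ c E z * |f (g E z)| := by
    by_contra! hlt
    have : M < M := calc
      M = |∑ E', p E' * (c E' z * f (g E' z))| := by rw [← hz, ← weightedShift_apply, hf]
      _ ≤ ∑ E', p E' * (c E' z * |f (g E' z)|) := by
        refine (abs_sum_le_sum_abs _ _).trans_eq (sum_congr rfl fun E' _ => ?_)
        rw [abs_mul, abs_mul, abs_of_nonneg (hp.1 E'), abs_of_nonneg (hc0 E' z)]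
      _ < ∑ E', p E' * M := sum_lt_sum (fun E' _ => mul_le_mul_of_nonneg_left (hstep E') (hp.1 E'))
          ⟨E, mem_univ E, mul_lt_mul_of_pos_left hlt hE⟩
      _ = M := by rw [← sum_mul, hp.2, one_mul]
    exact lt_irrefl M this
  refine ⟨fun h0 => ?_, le_antisymm (hM _) ?_⟩
  · rw [h0, zero_mul] at hmax
    exact hM0.not_ge hmax
  · exact hmax.trans (mul_le_of_le_one_left (abs_nonneg _) (hc1 E z))

/-- Maximum principle: a nonzero fixed point would carry a maximum of `|f|` along `L` into `Z`
with nonzero weight. -/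
theorem injective_id_sub_weightedShift [Finite ι] (hp : IsDist p) (hc0 : ∀ E z, 0 ≤ c E z)
    (hc1 : ∀ E z, c E z ≤ 1) (Z : Set ι) (hZ : ∀ E z, g E z ∈ Z → c E z = 0)
    (L : List κ) (hL : L ≠ []) (hLp : ∀ E ∈ L, 0 < p E) (hLZ : ∀ z, L.foldr g z ∈ Z) :
    Function.Injective ⇑(1 - weightedShift p c g : Module.End ℝ (ι → ℝ)) := by
  rw [← LinearMap.ker_eq_bot, LinearMap.ker_eq_bot']
  intro f hf
  replace hf : weightedShift p c g f = f := (sub_eq_zero.mp hf).symm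
  by_contra hne
  obtain ⟨z₁, hz₁⟩ := Function.ne_iff.mp hne
  have : Nonempty ι := ⟨z₁⟩
  obtain ⟨z₀, hz₀⟩ := Finite.exists_max fun z => |f z|
  have hM0 : 0 < |f z₀| := (abs_pos.mpr hz₁).trans_le (hz₀ z₁)
  have hpath : ∀ L' : List κ, (∀ E ∈ L', 0 < p E) → |f (L'.foldr g z₀)| = |f z₀| := by
    intro L' hL'
    induction L' with
    | nil => rfl
    | cons E L' ih =>
      simp only [List.mem_cons, forall_eq_or_imp] at hL'
      exact (weight_ne_zero_and_abs_eq_of_isMax hp hc0 hc1 hf hz₀ hM0 (ih hL'.2) hL'.1).2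
  obtain ⟨E, L', rfl⟩ := List.exists_cons_of_ne_nil hL
  simp only [List.mem_cons, forall_eq_or_imp] at hLp
  exact (weight_ne_zero_and_abs_eq_of_isMax hp hc0 hc1 hf hz₀ hM0
    (hpath L' hLp.2) hLp.1).1 (hZ E _ (hLZ z₀))

end WeightedShift

/-- `f n = (1 - T)⁻¹ (f n - T (f n))`, and `(1 - T)⁻¹` does not depend on `n`. -/
theorem apply_mem_of_forall_sub_apply_mem {ι J : Type*} [Fintype ι] [DecidableEq ι]
    {T : (ι → ℝ) →ₗ[ℝ] (ι → ℝ)} (hT : Function.Injective ⇑(1 - T : Module.End ℝ (ι → ℝ)))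
    {V : Submodule ℝ (J → ℝ)} {f : J → ι → ℝ} (hf : ∀ z, (fun n => (f n - T (f n)) z) ∈ V)
    (z : ι) : (fun n => f n z) ∈ V := by
  set e := LinearEquiv.ofInjectiveEndo _ hT
  have hsol : (fun n => f n z)
      = ∑ w, e.symm (fun w' => if w = w' then 1 else 0) z • fun n => (f n - T (f n)) w := by
    ext n
    have : f n = e.symm (f n - T (f n)) := (e.symm_apply_apply (f n)).symm
    conv_lhs => rw [this, ← LinearEquiv.coe_toLinearMap,
      LinearMap.pi_apply_eq_sum_univ e.symm.toLinearMap]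
    simp [Finset.sum_apply, mul_comm]
  rw [hsol]
  exact Submodule.sum_mem _ fun w _ => Submodule.smul_mem _ _ (hf w)

open Polynomial in
/-- Families `n ↦ P (1/n)`, indexed by the number `n` of strategies, with `deg P < k`. -/
noncomputable def invPolySpace (k : ℕ) : Submodule ℝ (ℕ+ → ℝ) :=
  (degreeLT ℝ k).map (LinearMap.pi fun n : ℕ+ => leval ((n : ℝ)⁻¹))

open Polynomial in
lemma mem_invPolySpace {k : ℕ} {F : ℕ+ → ℝ} :
    F ∈ invPolySpace k ↔ ∃ P : ℝ[X], P.degree < k ∧ ∀ n : ℕ+, P.eval (n : ℝ)⁻¹ = F n := by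
  simp [invPolySpace, mem_degreeLT, funext_iff]

lemma invPolySpace_mono : Monotone invPolySpace :=
  fun _ _ h => Submodule.map_mono (Polynomial.degreeLT_mono h)

lemma const_mem_invPolySpace_one (a : ℝ) : (fun _ => a) ∈ invPolySpace 1 :=
  mem_invPolySpace.mpr ⟨Polynomial.C a, (Polynomial.degree_C_le).trans_lt (by norm_num),
    fun _ => Polynomial.eval_C⟩

open Polynomial in
lemma inv_pow_mul_mem_invPolySpace {j : ℕ} {F : ℕ+ → ℝ} (hF : F ∈ invPolySpace j) (m : ℕ) :
    (fun n : ℕ+ => (n : ℝ)⁻¹ ^ m * F n) ∈ invPolySpace (j + m) := by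
  obtain ⟨P, hP, hPF⟩ := mem_invPolySpace.mp hF
  refine mem_invPolySpace.mpr ⟨X ^ m * P, ?_, fun n => by simp [hPF]⟩
  rcases eq_or_ne P 0 with rfl | hP0
  · simp
  rw [degree_eq_natDegree hP0, Nat.cast_lt] at hP
  rw [degree_mul, degree_X_pow, degree_eq_natDegree hP0, ← Nat.cast_add, Nat.cast_lt]
  omega

lemma exists_coeff_of_mem_invPolySpace {k : ℕ} {F : ℕ+ → ℝ} (hF : F ∈ invPolySpace k) :
    ∃ c : ℕ → ℝ, ∀ n : ℕ+, F n = ∑ d ∈ range k, c d * (n : ℝ)⁻¹ ^ d := by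
  obtain ⟨P, hP, hPF⟩ := mem_invPolySpace.mp hF
  refine ⟨P.coeff, fun n => ?_⟩
  rcases eq_or_ne P 0 with rfl | hP0
  · simp [← hPF]
  rw [← hPF, Polynomial.eval_eq_sum_range' ((Polynomial.natDegree_lt_iff_degree_lt hP0).mpr hP)]

theorem sum_prod_mul_prod_indicator {ι α : Type*} [Fintype ι] [DecidableEq ι] [Fintype α]
    [DecidableEq α] (h : ι → α → ℝ) (hh : ∀ s, ∑ a, h s a = 1) (S : Finset ι) (t : α) :
    ∑ y : ι → α, (∏ s, h s (y s)) * ∏ s ∈ S, (if y s = t then 1 else 0) = ∏ s ∈ S, h s t := by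
  calc ∑ y : ι → α, (∏ s, h s (y s)) * ∏ s ∈ S, (if y s = t then 1 else 0)
      = ∑ y : ι → α, ∏ s, h s (y s) * (if s ∈ S then (if y s = t then 1 else 0) else 1) := by
        simp_rw [prod_mul_distrib, prod_ite_mem, univ_inter]
    _ = ∏ s, ∑ a, h s a * (if s ∈ S then (if a = t then 1 else 0) else 1) := by
        rw [Fintype.prod_sum]
    _ = ∏ s, if s ∈ S then h s t else 1 := by
        refine prod_congr rfl fun s _ => ?_
        by_cases hs : s ∈ S
        · simp only [if_pos hs, mul_ite, mul_one, mul_zero, sum_ite_eq', mem_univ, if_true]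
        · simp only [if_neg hs, mul_one, hh]
    _ = ∏ s ∈ S, h s t := by rw [prod_ite_mem, univ_inter]

theorem sum_prod_indicator_of_nonempty {ι α : Type*} [DecidableEq α] [Fintype α]
    {S : Finset ι} (hS : S.Nonempty) (y : ι → α) :
    ∑ t, ∏ s ∈ S, (if y s = t then (1 : ℝ) else 0) = if #(S.image y) ≤ 1 then 1 else 0 := by
  obtain ⟨s₀, hs₀⟩ := hS
  simp_rw [prod_boole]
  rw [sum_eq_single (y s₀)]
  · refine if_congr ?_ rfl rfl
    simp only [card_le_one, forall_mem_image]
    exact ⟨fun h s hs s' hs' => (h s hs).trans (h s' hs').symm, fun h s hs => h hs hs₀⟩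
  · intro t _ ht
    rw [if_neg fun h => ht (h s₀ hs₀).symm]
  · simp

theorem sum_prod_mul_ite_card_image_le_one {ι α : Type*} [Fintype ι] [DecidableEq ι] [Fintype α]
    [DecidableEq α] (h : ι → α → ℝ) (hh : ∀ s, ∑ a, h s a = 1) {S : Finset ι} (hS : S.Nonempty) :
    ∑ y : ι → α, (∏ s, h s (y s)) * (if #(S.image y) ≤ 1 then 1 else 0)
      = ∑ t, ∏ s ∈ S, h s t := by
  simp_rw [← sum_prod_indicator_of_nonempty hS, mul_sum]
  rw [sum_comm]
  exact sum_congr rfl fun t _ => sum_prod_mul_prod_indicator h hh S t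

section Population

variable {N n : ℕ}

def mutRate (u : ℝ) (E : Event N) (s : Fin N) : ℝ := if s ∈ E.1 then u else 0

/-- The law of the new strategy at site `s` after the event `E` from the state `x`. -/
noncomputable def siteLaw (u : ℝ) (E : Event N) (x : Fin N → Fin n) (s : Fin N) (a : Fin n) : ℝ :=
  (1 - mutRate u E s) * (if a = x (extMap E s) then 1 else 0) + mutRate u E s / n

lemma transMat_eq_sum_prod_siteLaw (p : Event N → ℝ) (u : ℝ) (x y : Fin N → Fin n) :
    transMat N n p u x y = ∑ E, p E * ∏ s, siteLaw u E x s (y s) := by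
  refine sum_congr rfl fun E _ => ?_
  rw [mul_assoc, ← prod_mul_prod_compl E.1]
  congr 2 <;> refine prod_congr rfl fun s hs => ?_
  · simp [siteLaw, mutRate, extMap, hs]
  · simp [siteLaw, mutRate, extMap, mem_compl.mp hs]

lemma sum_siteLaw [NeZero n] (u : ℝ) (E : Event N) (x : Fin N → Fin n) (s : Fin N) :
    ∑ a, siteLaw u E x s a = 1 := by
  simp only [siteLaw, sum_add_distrib, mul_ite, mul_one, mul_zero, sum_ite_eq', mem_univ,
    if_true, sum_const, card_univ, Fintype.card_fin, nsmul_eq_mul]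
  field_simp [(NeZero.ne n : n ≠ 0)]
  ring

noncomputable def phiSet (π : (Fin N → Fin n) → ℝ) (S : Finset (Fin N)) : ℝ :=
  ∑ x, π x * if #(S.image x) ≤ 1 then 1 else 0

/-- The probability that during `E` exactly the sites of `T ⊆ S` keep their parent's strategy. -/
def copyProb (u : ℝ) (E : Event N) (S T : Finset (Fin N)) : ℝ :=
  (∏ s ∈ T, (1 - mutRate u E s)) * ∏ s ∈ S \ T, mutRate u E s

lemma sum_prod_siteLaw (u : ℝ) (E : Event N) (x : Fin N → Fin n) (S : Finset (Fin N)) :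
    ∑ t, ∏ s ∈ S, siteLaw u E x s t = ∑ T ∈ S.powerset, copyProb u E S T
      * (n : ℝ)⁻¹ ^ (S \ T).card * ∑ t, ∏ s ∈ T, (if x (extMap E s) = t then 1 else 0) := by
  simp only [siteLaw, prod_add]
  rw [sum_comm]
  refine sum_congr rfl fun T _ => ?_
  rw [mul_sum]
  refine sum_congr rfl fun t _ => ?_
  simp only [prod_mul_distrib, div_eq_mul_inv, prod_const, copyProb, @eq_comm _ t]
  ring

lemma IsStationary.sum_mul_eq {P : (Fin N → Fin n) → (Fin N → Fin n) → ℝ}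
    {π : (Fin N → Fin n) → ℝ} (hπ : IsStationary P π) (F : (Fin N → Fin n) → ℝ) :
    ∑ y, π y * F y = ∑ x, π x * ∑ y, P x y * F y := by
  conv_lhs => enter [2, y]; rw [← hπ.2 y, sum_mul]
  rw [sum_comm]
  exact sum_congr rfl fun x _ => by rw [mul_sum]; exact sum_congr rfl fun y _ => mul_assoc _ _ _

lemma sum_transMat_mul_indicator [NeZero n] (p : Event N → ℝ) (u : ℝ) (x : Fin N → Fin n)
    {S : Finset (Fin N)} (hS : S.Nonempty) :
    ∑ y, transMat N n p u x y * (if #(S.image y) ≤ 1 then 1 else 0)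
      = ∑ E, p E * ∑ t, ∏ s ∈ S, siteLaw u E x s t := by
  simp_rw [transMat_eq_sum_prod_siteLaw, sum_mul, mul_assoc]
  rw [sum_comm]
  simp_rw [← mul_sum, sum_prod_mul_ite_card_image_le_one _ (sum_siteLaw u _ x) hS]

lemma sum_mul_sum_prod_indicator {π : (Fin N → Fin n) → ℝ} (hπ : IsDist π) (E : Event N)
    (T : Finset (Fin N)) :
    ∑ x, π x * ∑ t, ∏ s ∈ T, (if x (extMap E s) = t then (1 : ℝ) else 0)
      = if T = ∅ then (n : ℝ) else phiSet π (T.image (extMap E)) := by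
  split_ifs with hT
  · simp [hT, ← sum_mul, hπ.2]
  · simp only [sum_prod_indicator_of_nonempty (nonempty_iff_ne_empty.mpr hT), phiSet,
      image_image]
    rfl

theorem phiSet_eq_sum [NeZero n] {p : Event N → ℝ} {u : ℝ} {π : (Fin N → Fin n) → ℝ}
    (hπ : IsStationary (transMat N n p u) π) {S : Finset (Fin N)} (hS : S.Nonempty) :
    phiSet π S = ∑ E, p E * ∑ T ∈ S.powerset, copyProb u E S T * (n : ℝ)⁻¹ ^ (S \ T).card
      * (if T = ∅ then (n : ℝ) else phiSet π (T.image (extMap E))) := by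
  simp_rw [← sum_mul_sum_prod_indicator hπ.1]
  rw [phiSet, hπ.sum_mul_eq]
  simp_rw [sum_transMat_mul_indicator p u _ hS, sum_prod_siteLaw, mul_sum]
  rw [sum_comm]
  refine sum_congr rfl fun E _ => ?_
  rw [sum_comm]
  exact sum_congr rfl fun T _ => sum_congr rfl fun x _ => sum_congr rfl fun t _ => by ring

end Population

section Lineages

variable {N : ℕ}

lemma mutRate_nonneg {u : ℝ} (hu0 : 0 ≤ u) (E : Event N) (s : Fin N) : 0 ≤ mutRate u E s := by
  unfold mutRate; split_ifs <;> simp [hu0]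

lemma mutRate_le_one {u : ℝ} (hu1 : u ≤ 1) (E : Event N) (s : Fin N) : mutRate u E s ≤ 1 := by
  unfold mutRate; split_ifs <;> simp [hu1]

lemma copyProb_nonneg {u : ℝ} (hu0 : 0 ≤ u) (hu1 : u ≤ 1) (E : Event N) (S T : Finset (Fin N)) :
    0 ≤ copyProb u E S T :=
  mul_nonneg (prod_nonneg fun s _ => sub_nonneg.mpr (mutRate_le_one hu1 E s))
    (prod_nonneg fun s _ => mutRate_nonneg hu0 E s)

lemma copyProb_le_one {u : ℝ} (hu0 : 0 ≤ u) (hu1 : u ≤ 1) (E : Event N) (S T : Finset (Fin N)) :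
    copyProb u E S T ≤ 1 :=
  mul_le_one₀
    (prod_le_one (fun s _ => sub_nonneg.mpr (mutRate_le_one hu1 E s))
      fun s _ => sub_le_self _ (mutRate_nonneg hu0 E s))
    (prod_nonneg fun s _ => mutRate_nonneg hu0 E s)
    (prod_le_one (fun s _ => mutRate_nonneg hu0 E s) fun s _ => mutRate_le_one hu1 E s)

/-- The weight of tracing the lineages of `S` back through `E` without any two of them merging. -/
noncomputable def noCoalescenceWeight (u : ℝ) (E : Event N) (S : Finset (Fin N)) : ℝ :=
  if 1 < #S ∧ #(S.image (extMap E)) = #S then copyProb u E S S else 0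

noncomputable def lineageShift (p : Event N → ℝ) (u : ℝ) :
    (Finset (Fin N) → ℝ) →ₗ[ℝ] (Finset (Fin N) → ℝ) :=
  weightedShift p (noCoalescenceWeight u) fun E S => S.image (extMap E)

lemma foldr_image_extMap (L : List (Event N)) (S : Finset (Fin N)) :
    L.foldr (fun E S => S.image (extMap E)) S = S.image ((L.map extMap).foldr (· ∘ ·) id) := by
  induction L with
  | nil => simp
  | cons E L ih => simp [ih, image_image]

theorem injective_one_sub_lineageShift {p : Event N → ℝ} (hp : IsDist p)
    (hfix : FixationAxiom p) {u : ℝ} (hu0 : 0 ≤ u) (hu1 : u ≤ 1) :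
    Function.Injective ⇑(1 - lineageShift p u : Module.End ℝ (Finset (Fin N) → ℝ)) := by
  obtain ⟨i₀, m, Es, hm, hpos, -, hcomp⟩ := hfix
  refine injective_id_sub_weightedShift hp
    (fun E S => by unfold noCoalescenceWeight; split_ifs <;> simp [copyProb_nonneg hu0 hu1])
    (fun E S => by unfold noCoalescenceWeight; split_ifs <;> simp [copyProb_le_one hu0 hu1])
    {S | #S ≤ 1} (fun E S (hS : #(S.image (extMap E)) ≤ 1) => if_neg fun h => by omega)
    (List.ofFn Es) (List.ofFn_eq_nil_iff.not.mpr (by omega)) (fun E hE => ?_) (fun S => ?_)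
  · obtain ⟨k, rfl⟩ := List.mem_ofFn.mp hE
    exact hpos k
  · change #_ ≤ 1
    rw [foldr_image_extMap, List.map_ofFn, card_le_one]
    simp only [mem_image]
    rintro _ ⟨j, -, rfl⟩ _ ⟨j', -, rfl⟩
    exact (hcomp j).trans (hcomp j').symm

end Lineages

section Polynomiality

variable {N : ℕ} {p : Event N → ℝ} {u : ℝ} {πn : (n : ℕ) → (Fin N → Fin n) → ℝ}

lemma phiSet_eq_one_of_card_le_one {n : ℕ} {π : (Fin N → Fin n) → ℝ} (hπ : IsDist π)
    {S : Finset (Fin N)} (hS : #S ≤ 1) : phiSet π S = 1 := by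
  simp [phiSet, card_image_le.trans hS, hπ.2]

noncomputable def phiLevel (πn : (n : ℕ) → (Fin N → Fin n) → ℝ) (k : ℕ) (n : ℕ+)
    (S : Finset (Fin N)) : ℝ :=
  if #S = k then phiSet (πn n) S else 0

lemma phiLevel_sub_lineageShift_of_card_ne {k : ℕ} (n : ℕ+) {S : Finset (Fin N)} (hS : #S ≠ k) :
    (phiLevel πn k n - lineageShift p u (phiLevel πn k n)) S = 0 := by
  simp only [Pi.sub_apply, lineageShift, weightedShift_apply, phiLevel, if_neg hS,
    noCoalescenceWeight, zero_sub, neg_eq_zero]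
  refine sum_eq_zero fun E _ => ?_
  split_ifs <;> first | omega | simp

variable {k : ℕ} (ih : ∀ T : Finset (Fin N), T.Nonempty → #T < k →
    (fun n : ℕ+ => phiSet (πn n) T) ∈ invPolySpace #T)
include ih

lemma phiSet_image_mem_invPolySpace (E : Event N) {T : Finset (Fin N)} (hT : T.Nonempty)
    (hTk : #T < k) : (fun n : ℕ+ => phiSet (πn n) (T.image (extMap E))) ∈ invPolySpace #T :=
  invPolySpace_mono card_image_le
    (ih _ (hT.image _) (card_image_le.trans_lt hTk))

lemma recursionTerm_mem_invPolySpace (hk : 1 < k) (E : Event N) {S T : Finset (Fin N)}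
    (hS : #S = k) (hTS : T ⊆ S) :
    (fun n : ℕ+ => copyProb u E S T * (n : ℝ)⁻¹ ^ #(S \ T)
        * (if T = ∅ then (n : ℝ) else phiSet (πn n) (T.image (extMap E)))
      - if T = S then noCoalescenceWeight u E S * phiLevel πn k n (S.image (extMap E)) else 0)
      ∈ invPolySpace k := by
  have hSne : S ≠ ∅ := by rintro rfl; rw [card_empty] at hS; omega
  by_cases hTS' : T = S
  · subst hTS'
    by_cases himg : #(T.image (extMap E)) = k
    · convert zero_mem (invPolySpace k) using 1
      ext n
      simp [noCoalescenceWeight, phiLevel, himg, hS, hk, hSne]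
    · have hlt : #(T.image (extMap E)) < k := lt_of_le_of_ne (hS ▸ card_image_le) himg
      convert invPolySpace_mono hlt.le ((invPolySpace _).smul_mem (copyProb u E T T)
        (ih _ (nonempty_iff_ne_empty.mpr hSne |>.image _) hlt)) using 1
      ext n
      simp [noCoalescenceWeight, phiLevel, himg, hS, hSne]
  simp only [if_neg hTS', sub_zero]
  by_cases hT : T = ∅
  · subst hT
    have hmem := inv_pow_mul_mem_invPolySpace (const_mem_invPolySpace_one 1) (k - 1)
    rw [show 1 + (k - 1) = k by omega] at hmem
    convert (invPolySpace k).smul_mem (copyProb u E S ∅) hmem using 1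
    ext n
    simp only [sdiff_empty, hS, Pi.smul_apply, smul_eq_mul, mul_one, ite_true]
    obtain ⟨j, rfl⟩ : ∃ j, k = j + 1 := ⟨k - 1, by omega⟩
    rw [Nat.add_sub_cancel, pow_succ, mul_assoc, mul_assoc, inv_mul_cancel₀ (by positivity),
      mul_one]
  · have hTk : #T < k := hS ▸ card_lt_card (ssubset_of_subset_of_ne hTS hTS')
    have hmem := inv_pow_mul_mem_invPolySpace
      (phiSet_image_mem_invPolySpace ih E (nonempty_iff_ne_empty.mpr hT) hTk) #(S \ T)
    rw [add_comm, card_sdiff_add_card_eq_card hTS, hS] at hmem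
    convert (invPolySpace k).smul_mem (copyProb u E S T) hmem using 1
    ext n
    simp only [if_neg hT, Pi.smul_apply, smul_eq_mul, mul_assoc]

lemma phiLevel_sub_lineageShift_mem (hπn : ∀ n : ℕ+, IsStationary (transMat N n p u) (πn n))
    (hk : 1 < k) (S : Finset (Fin N)) :
    (fun n : ℕ+ => (phiLevel πn k n - lineageShift p u (phiLevel πn k n)) S)
      ∈ invPolySpace k := by
  by_cases hS : #S = k
  swap
  · simp only [phiLevel_sub_lineageShift_of_card_ne _ hS]
    exact zero_mem _
  have hSne : S.Nonempty := card_pos.mp (by omega)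
  have hrec : (fun n : ℕ+ => (phiLevel πn k n - lineageShift p u (phiLevel πn k n)) S)
      = ∑ E, p E • ∑ T ∈ S.powerset, fun n : ℕ+ => copyProb u E S T * (n : ℝ)⁻¹ ^ #(S \ T)
          * (if T = ∅ then (n : ℝ) else phiSet (πn n) (T.image (extMap E)))
        - if T = S then noCoalescenceWeight u E S * phiLevel πn k n (S.image (extMap E))
          else 0 := by
    ext n
    simp only [Finset.sum_apply, Pi.smul_apply, smul_eq_mul, Pi.sub_apply, lineageShift,
      weightedShift_apply]
    rw [phiLevel, if_pos hS, phiSet_eq_sum (hπn n) hSne, ← sum_sub_distrib]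
    refine sum_congr rfl fun E _ => ?_
    rw [sum_sub_distrib, sum_ite_eq', if_pos (mem_powerset_self S), mul_sub]
  rw [hrec]
  exact sum_mem fun E _ => Submodule.smul_mem _ _ <| sum_mem fun T hT =>
    recursionTerm_mem_invPolySpace ih hk E hS (mem_powerset.mp hT)

end Polynomiality

theorem phiSet_mem_invPolySpace {N : ℕ} {p : Event N → ℝ} (hp : IsDist p)
    (hfix : FixationAxiom p) {u : ℝ} (hu0 : 0 ≤ u) (hu1 : u ≤ 1)
    {πn : (n : ℕ) → (Fin N → Fin n) → ℝ}
    (hπn : ∀ n : ℕ+, IsStationary (transMat N n p u) (πn n)) {S : Finset (Fin N)}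
    (hS : S.Nonempty) : (fun n : ℕ+ => phiSet (πn n) S) ∈ invPolySpace #S := by
  induction hk : #S using Nat.strong_induction_on generalizing S with
  | _ k ih =>
    rcases le_or_gt k 1 with hk1 | hk1
    · have hone : (fun n : ℕ+ => phiSet (πn n) S) = fun _ => 1 :=
        funext fun n => phiSet_eq_one_of_card_le_one (hπn n).1 (hk ▸ hk1)
      rw [hone]
      exact invPolySpace_mono (hk ▸ card_pos.mpr hS) (const_mem_invPolySpace_one 1)
    · have hlevel := apply_mem_of_forall_sub_apply_mem
        (injective_one_sub_lineageShift hp hfix hu0 hu1)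
        (phiLevel_sub_lineageShift_mem (fun T hT hTk => ih _ hTk hT rfl) hπn hk1) S
      simpa [phiLevel, hk] using hlevel

lemma phi2_eq_phiSet {N n : ℕ} (π : (Fin N → Fin n) → ℝ) (i j : Fin N) :
    phi2 π i j = phiSet π {i, j} := by
  refine sum_congr rfl fun x _ => congrArg _ (if_congr ?_ rfl rfl)
  simp only [image_insert, image_singleton, card_le_one, mem_insert, mem_singleton,
    forall_eq_or_imp, forall_eq]
  grind

lemma phi3_eq_phiSet {N n : ℕ} (π : (Fin N → Fin n) → ℝ) (i j k : Fin N) :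
    phi3 π i j k = phiSet π {i, j, k} := by
  refine sum_congr rfl fun x _ => congrArg _ (if_congr ?_ rfl rfl)
  simp only [image_insert, image_singleton, card_le_one, mem_insert, mem_singleton,
    forall_eq_or_imp, forall_eq]
  grind

theorem stmt19_general (N : ℕ)
    (p : Event N → ℝ) (hp : IsDist p) (hfix : FixationAxiom p)
    (u : ℝ) (hu0 : 0 < u) (hu1 : u ≤ 1)
    (πn : (n : ℕ) → (Fin N → Fin n) → ℝ)
    (hπn : ∀ n : ℕ, 1 ≤ n →
      IsStationary (transMat N n p u) (πn n) ∧
      ∀ π', IsStationary (transMat N n p u) π' → π' = πn n) :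
    (∀ i j : Fin N, ∃ a b : ℝ, ∀ n : ℕ, 1 ≤ n →
        (n:ℝ) * phi2 (πn n) i j = a * (n:ℝ) + b) ∧
    (∀ i j k : Fin N, ∃ c d e : ℝ, ∀ n : ℕ, 1 ≤ n →
        (n:ℝ)^2 * phi3 (πn n) i j k = c * (n:ℝ)^2 + d * (n:ℝ) + e) := by
  have hpoly : ∀ S : Finset (Fin N), S.Nonempty → ∀ k, #S ≤ k → ∃ c : ℕ → ℝ, ∀ n : ℕ+,
      phiSet (πn n) S = ∑ d ∈ range k, c d * (n : ℝ)⁻¹ ^ d := fun S hS k hk =>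
    exists_coeff_of_mem_invPolySpace <| invPolySpace_mono hk <|
      phiSet_mem_invPolySpace hp hfix hu0.le hu1 (fun n => (hπn n n.pos).1) hS
  refine ⟨fun i j => ?_, fun i j k => ?_⟩
  · obtain ⟨c, hc⟩ := hpoly {i, j} (insert_nonempty _ _) 2 card_le_two
    refine ⟨c 0, c 1, fun n hn => ?_⟩
    have hn0 : (n : ℝ) ≠ 0 := by positivity
    have hcn := hc ⟨n, hn⟩
    rw [PNat.mk_coe] at hcn
    rw [phi2_eq_phiSet, hcn]
    simp only [inv_pow, sum_range_succ, range_one, sum_singleton, pow_zero, inv_one, mul_one,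
      pow_one]
    field_simp
  · obtain ⟨c, hc⟩ := hpoly {i, j, k} (insert_nonempty _ _) 3 card_le_three
    refine ⟨c 0, c 1, c 2, fun n hn => ?_⟩
    have hn0 : (n : ℝ) ≠ 0 := by positivity
    have hcn := hc ⟨n, hn⟩
    rw [PNat.mk_coe] at hcn
    rw [phi3_eq_phiSet, hcn]
    simp only [inv_pow, sum_range_succ, range_one, sum_singleton, pow_zero, inv_one, mul_one,
      pow_one]
    field_simp

/-- for a fixed neutral replacement rule and mutation rate,
`n·φ_ij(n)` is an affine function of the number `n` of strategies, and
`n²·φ_ijk(n)` is a quadratic function of `n`. -/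
theorem stmt19 (N : ℕ) (hN : 1 ≤ N)
    (p : Event N → ℝ) (hp : IsDist p) (hfix : FixationAxiom p)
    (u : ℝ) (hu0 : 0 < u) (hu1 : u ≤ 1)
    (πn : (n : ℕ) → (Fin N → Fin n) → ℝ)
    (hπn : ∀ n : ℕ, 1 ≤ n →
      IsStationary (transMat N n p u) (πn n) ∧
      ∀ π', IsStationary (transMat N n p u) π' → π' = πn n) :
    (∀ i j : Fin N, ∃ a b : ℝ, ∀ n : ℕ, 1 ≤ n →
        (n:ℝ) * phi2 (πn n) i j = a * (n:ℝ) + b) ∧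
    (∀ i j k : Fin N, ∃ c d e : ℝ, ∀ n : ℕ, 1 ≤ n →
        (n:ℝ)^2 * phi3 (πn n) i j k = c * (n:ℝ)^2 + d * (n:ℝ) + e) :=
  stmt19_general N p hp hfix u hu0 hu1 πn hπn

end SCT
end
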